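/- arXiv:2503.01929 — 5 statements merged into one kernel-verified Lean document; each statement's English description precedes it below -/
import Mathlib

section
/- Let A and B be abelian groups, f ∈ A^B a finitely supported function, and N ≤ B. Let S = {p − q : p, q ∈ supp(f)} ⊆ B and N' = ⟨N ∩ S⟩ ≤ N. Then the image of f in A^{B/N} is zero if and only if the image of f in A^{B/N'} is zero. -/
/-!
The image of `f` in `A^{B/N}` is the pushforward of its image in `A^{B/N'}` along the
projection `B/N' → B/N`. That projection is injective on the cosets meeting `supp f`: two
points of the support in the same `N`-coset differ by an element of `N ∩ S ⊆ N'`. A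
pushforward along a map injective on the support vanishes only if the function does.
-/

open Finsupp QuotientAddGroup

theorem Finsupp.mapDomain_eq_zero_iff_of_injOn {α β M : Type*} [AddCommMonoid M] {f : α → β}
    {v : α →₀ M} (hf : Set.InjOn f v.support) : mapDomain f v = 0 ↔ v = 0 := by
  classical
  rw [← support_eq_empty, mapDomain_support_of_injOn v hf, Finset.image_eq_empty,
    support_eq_empty]

theorem QuotientAddGroup.injOn_map_image_mk' {B : Type*} [AddCommGroup B] {N' N : AddSubgroup B}
    (hle : N' ≤ N) {T : Set B} (hT : ∀ p ∈ T, ∀ q ∈ T, p - q ∈ N → p - q ∈ N') :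
    Set.InjOn (map N' N (AddMonoidHom.id B) hle) (mk' N' '' T) := by
  rintro _ ⟨p, hp, rfl⟩ _ ⟨q, hq, rfl⟩ hpq
  have hN : (p : B ⧸ N) = q := hpq
  rw [QuotientAddGroup.eq, neg_add_eq_sub] at hN
  rw [mk'_apply, mk'_apply, QuotientAddGroup.eq, neg_add_eq_sub]
  exact hT q hq p hp hN

/-- With `S = {p − q : p, q ∈ supp f}` and `N' = ⟨N ∩ S⟩ ≤ N`, the image of `f` in
`A^{B/N}` is zero iff the image of `f` in `A^{B/N'}` is zero. -/
theorem statement12 {A B : Type*} [AddCommGroup A] [AddCommGroup B]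
    (f : B →₀ A) (N : AddSubgroup B)
    (S : Set B) (hS : S = {b : B | ∃ p ∈ f.support, ∃ q ∈ f.support, b = p - q})
    (N' : AddSubgroup B) (hN' : N' = AddSubgroup.closure ((N : Set B) ∩ S)) :
    Finsupp.mapDomain (⇑(QuotientAddGroup.mk' N)) f = 0 ↔
      Finsupp.mapDomain (⇑(QuotientAddGroup.mk' N')) f = 0 := by
  have hle : N' ≤ N := hN' ▸ (AddSubgroup.closure_le N).mpr Set.inter_subset_left
  have hfactor : mapDomain (mk' N) f =
      mapDomain (map N' N (AddMonoidHom.id B) hle) (mapDomain (mk' N') f) := by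
    rw [← mapDomain_comp]
    rfl
  have hinj : Set.InjOn (map N' N (AddMonoidHom.id B) hle) (mapDomain (mk' N') f).support := by
    refine (injOn_map_image_mk' (T := f.support) hle fun p hp q hq hpq => ?_).mono ?_
    · exact hN' ▸ AddSubgroup.subset_closure ⟨hpq, hS ▸ ⟨p, hp, q, hq, rfl⟩⟩
    · classical exact_mod_cast mapDomain_support
  rw [hfactor, mapDomain_eq_zero_iff_of_injOn hinj]
end

section
/- Let T = {t₁,…,t_{3k}} be a multiset of positive integers with target L = (1/k)Σt_i, and in the group ring ℤ₂[ℤ] (lamplighter configurations) define c_y = Σ_{i=0}^{y−1} x^{−i} for y ∈ ℕ (where x is the generator of ℤ written multiplicatively) and c = Σ_{i=0}^{k−1} x^{-(L+1)i} · c_L. If T admits a partition into k triples each summing to L, then there exist integers δ₁,…,δ_{3k} such that Σ_{i=1}^{3k} x^{δ_i} c_{t_i} = c in ℤ₂[ℤ]. -/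
namespace Stmt14

/-- `c_y = ∑_{i=0}^{y−1} x^{−i}` in `ℤ₂[ℤ]`. -/
noncomputable def cseg (y : ℕ) : AddMonoidAlgebra (ZMod 2) ℤ :=
  ∑ i ∈ Finset.range y, AddMonoidAlgebra.single (-(i : ℤ)) 1

/-- `c = ∑_{i=0}^{k−1} x^{−(L+1)i}·c_L` in `ℤ₂[ℤ]`. -/
noncomputable def ctarget (k L : ℕ) : AddMonoidAlgebra (ZMod 2) ℤ :=
  ∑ i ∈ Finset.range k, AddMonoidAlgebra.single (-(((L : ℤ) + 1) * i)) 1 * cseg L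

/-!
`c_y` is the indicator of the segment `[-(y-1), 0]`, and `x^δ c_y` is that segment shifted by `δ`.
The block `x^{-(L+1)j} c_L` of `c` is a segment of length `L`. The segments `c_{t_i}` of the
`j`-th part of the partition have total length `L`, so, shifted to lie end to end, they tile this
block exactly.
-/

open AddMonoidAlgebra Finset

theorem cseg_succ (n : ℕ) : cseg (n + 1) = cseg n + single (-(n : ℤ)) 1 := by
  rw [cseg, cseg, sum_range_succ]

theorem cseg_add (a b : ℕ) : cseg (a + b) = cseg a + single (-(a : ℤ)) 1 * cseg b := by
  induction b with
  | zero => simp [cseg]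
  | succ b ih =>
    rw [← add_assoc, cseg_succ, ih, cseg_succ, mul_add, single_mul_single, mul_one, add_assoc]
    push_cast
    ring_nf

theorem cseg_sum {ι : Type*} [LinearOrder ι] (s : Finset ι) (f : ι → ℕ) :
    cseg (∑ i ∈ s, f i) = ∑ i ∈ s, single (-((∑ j ∈ s with j < i, f j : ℕ) : ℤ)) 1 * cseg (f i) := by
  induction s using Finset.induction_on_max with
  | empty => simp [cseg]
  | insert a s ha ih =>
    have ha' : a ∉ s := fun h => (ha a h).false
    have h_lt_a : {j ∈ insert a s | j < a} = s := by
      rw [filter_insert, if_neg (lt_irrefl a), filter_true_of_mem ha]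
    have h_lt_mem : ∀ i ∈ s, {j ∈ insert a s | j < i} = {j ∈ s | j < i} := fun i hi => by
      rw [filter_insert, if_neg (ha i hi).asymm]
    rw [sum_insert ha', sum_insert ha', h_lt_a, add_comm (f a), cseg_add, ih, add_comm]
    exact congrArg _ (sum_congr rfl fun i hi => by rw [h_lt_mem i hi])

theorem single_mul_cseg_sum {ι : Type*} [LinearOrder ι] (d : ℤ) (s : Finset ι) (f : ι → ℕ) :
    single d 1 * cseg (∑ i ∈ s, f i) =
      ∑ i ∈ s, single (d - ((∑ j ∈ s with j < i, f j : ℕ) : ℤ)) 1 * cseg (f i) := by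
  rw [cseg_sum, mul_sum]
  refine sum_congr rfl fun i _ => ?_
  rw [← mul_assoc, single_mul_single, mul_one, sub_eq_add_neg]

theorem statement14_general (k L : ℕ) (t : Fin (3 * k) → ℕ)
    (g : Fin (3 * k) → Fin k)
    (hsum : ∀ j : Fin k, ∑ i ∈ Finset.univ.filter (fun i => g i = j), t i = L) :
    ∃ δ : Fin (3 * k) → ℤ,
      ∑ i, AddMonoidAlgebra.single (δ i) (1 : ZMod 2) * cseg (t i) = ctarget k L := by
  refine ⟨fun i => -(((L : ℤ) + 1) * (g i : ℕ)) - ((∑ j ∈ {j | g j = g i} with j < i, t j : ℕ) : ℤ),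
    ?_⟩
  rw [ctarget, ← Fin.sum_univ_eq_sum_range, ← sum_fiberwise univ g]
  refine sum_congr rfl fun j _ => ?_
  have h_block := single_mul_cseg_sum (-(((L : ℤ) + 1) * (j : ℕ))) {i | g i = j} t
  rw [hsum j] at h_block
  rw [h_block]
  refine sum_congr rfl fun i hi => ?_
  simp only [(mem_filter.mp hi).2]

/-- Forward direction of the 3-partition reduction: if `T = {t₁,…,t_{3k}}` admits a
partition into `k` triples each summing to `L = (1/k)∑tᵢ`, then there are shifts
`δᵢ ∈ ℤ` with `∑ᵢ x^{δᵢ}·c_{tᵢ} = c` in `ℤ₂[ℤ]`. -/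
theorem statement14 (k L : ℕ) (t : Fin (3 * k) → ℕ)
    (hpos : ∀ i, 0 < t i) (hL : ∑ i, t i = k * L)
    (g : Fin (3 * k) → Fin k)
    (htriple : ∀ j : Fin k, (Finset.univ.filter (fun i => g i = j)).card = 3)
    (hsum : ∀ j : Fin k, ∑ i ∈ Finset.univ.filter (fun i => g i = j), t i = L) :
    ∃ δ : Fin (3 * k) → ℤ,
      ∑ i, AddMonoidAlgebra.single (δ i) (1 : ZMod 2) * cseg (t i) = ctarget k L :=
  statement14_general k L t g hsum

end Stmt14
end

section
/- Let M ∈ Mat(n×n, ℤ) be a zero-one matrix with columns c₁,…,c_n ∈ ℤ^n. In the group (ℤ^n)^{ℤ₂} of functions from ℤ₂ = {0,1} to ℤ^n, define f_i by f_i(0) = c_i, f_i(1) = 0, and f by f(0) = −1_n, f(1) = 1_n − Σ_{i=1}^n c_i, where 1_n = (1,…,1). Then there exists a zero-one vector x̄ ∈ ℤ^n with M·x̄ = 1_n if and only if there exist δ₁,…,δ_n, δ ∈ ℤ₂ such that f₁^{δ₁} + ⋯ + f_n^{δ_n} + f^{δ} = 0 in (ℤ^n)^{ℤ₂}, where g^{ε}(u)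 = g(ε + u). -/
/-! Write `s u` for the sum of the columns `c_j` with `δ_j = u`. Since `f_j^{δ_j}(u)` is `c_j` when
`δ_j + u = 0`, i.e. `δ_j = u` in `ℤ₂`, and `0` otherwise, the shifted sum is `s ε - 1ₙ` at `u = ε` and
`s (ε + 1) + 1ₙ - ∑ c_j = 1ₙ - s ε` at `u = ε + 1`. So it vanishes iff `s ε = 1ₙ`, i.e. iff the
indicator vector of `{j | δ_j = ε}` solves `M x̄ = 1ₙ`; and every zero-one vector is such an indicator. -/

namespace Stmt15

open Finset Matrix

lemma ZMod.two_ne_iff_eq_add_one {a b : ZMod 2} : a ≠ b ↔ a = b + 1 := by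
  revert a b; decide

lemma Matrix.mulVec_boole {m n R : Type*} [Fintype n] [NonAssocSemiring R] (M : Matrix m n R)
    (p : n → Prop) [DecidablePred p] :
    M *ᵥ (fun j => if p j then 1 else 0) = ∑ j with p j, fun i => M i j := by
  ext i
  simp [Matrix.mulVec, dotProduct, sum_filter, Finset.sum_apply]

lemma exists_zeroOne_iff_exists_boole {ι R : Type*} [Zero R] [One R] (P : (ι → R) → Prop) :
    (∃ x : ι → R, (∀ i, x i = 0 ∨ x i = 1) ∧ P x) ↔
      ∃ (δ : ι → ZMod 2) (ε : ZMod 2), P fun j => if δ j = ε then 1 else 0 := by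
  classical
  constructor
  · rintro ⟨x, hx, hPx⟩
    refine ⟨fun j => if x j = 0 then 0 else 1, 1, ?_⟩
    have hx' : (fun j => if (if x j = 0 then 0 else 1 : ZMod 2) = 1 then (1 : R) else 0) = x := by
      funext j
      by_cases h0 : x j = 0
      · simp [h0]
      · rw [if_neg h0, if_pos rfl, (hx j).resolve_left h0]
    rwa [hx']
  · rintro ⟨δ, ε, hP⟩
    exact ⟨_, fun j => by split_ifs <;> simp, hP⟩

section Shift

variable {ι A : Type*} [Fintype ι] [AddCommGroup A]

lemma sum_shift_eq_sum_filter (c : ι → A) (F : ι → ZMod 2 → A)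
    (hF : ∀ j v, F j v = if v = 0 then c j else 0) (δ : ι → ZMod 2) (u : ZMod 2) :
    ∑ j, F j (δ j + u) = ∑ j with δ j = u, c j := by
  simp only [hF, CharTwo.add_eq_zero, sum_filter]

lemma sum_filter_add_sum_filter_add_one (c : ι → A) (δ : ι → ZMod 2) (ε : ZMod 2) :
    ∑ j with δ j = ε, c j + ∑ j with δ j = ε + 1, c j = ∑ j, c j := by
  simp only [← ZMod.two_ne_iff_eq_add_one, sum_filter_add_sum_filter_not]

lemma shift_sum_eq_zero_iff (c : ι → A) (t : A) (F : ι → ZMod 2 → A)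
    (hF : ∀ j v, F j v = if v = 0 then c j else 0) (f : ZMod 2 → A)
    (hf : ∀ v, f v = if v = 0 then -t else t - ∑ j, c j) (δ : ι → ZMod 2) (ε : ZMod 2) :
    (fun u => ∑ j, F j (δ j + u) + f (ε + u)) = 0 ↔ ∑ j with δ j = ε, c j = t := by
  have hε : ε + ε = 0 := CharTwo.add_self_eq_zero ε
  have hε1 : ε + (ε + 1) ≠ 0 := by rw [← add_assoc, hε]; decide
  have hsplit := sum_filter_add_sum_filter_add_one c δ ε
  simp only [funext_iff, Pi.zero_apply, sum_shift_eq_sum_filter c F hF]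
  constructor
  · intro h
    simpa [hf, hε, add_neg_eq_zero] using h ε
  · intro h u
    rcases eq_or_ne u ε with rfl | hu
    · simp [hf, hε, h]
    · rw [ZMod.two_ne_iff_eq_add_one.mp hu, hf, if_neg hε1, ← hsplit, h]
      abel

end Shift

theorem statement15_general (n : ℕ) (M : Matrix (Fin n) (Fin n) ℤ)
    (F : Fin n → ZMod 2 → (Fin n → ℤ))
    (hF : ∀ j ε, F j ε = if ε = 0 then (fun i => M i j) else 0)
    (f : ZMod 2 → (Fin n → ℤ))
    (hf : ∀ ε, f ε = if ε = 0 then (fun _ => -1) else (fun i => 1 - ∑ j, M i j)) :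
    (∃ x : Fin n → ℤ, (∀ i, x i = 0 ∨ x i = 1) ∧ M.mulVec x = fun _ => 1) ↔
    (∃ (δ : Fin n → ZMod 2) (ε : ZMod 2),
      (fun u : ZMod 2 => (∑ j, F j (δ j + u)) + f (ε + u)) = fun _ => (0 : Fin n → ℤ)) := by
  have hf' : ∀ v, f v = if v = 0 then -1 else 1 - ∑ j, fun i => M i j := fun v => by
    rw [hf]; split_ifs <;> ext i <;> simp [Finset.sum_apply]
  rw [exists_zeroOne_iff_exists_boole]
  refine exists_congr fun δ => exists_congr fun ε => ?_
  rw [Matrix.mulVec_boole, ← Pi.zero_def, shift_sum_eq_zero_iff _ 1 F hF f hf' δ ε]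
  rfl

/-- Reduction of the zero-one equation problem: `M·x̄ = 1ₙ` has a zero-one solution
iff the shifted functions `f₁^{δ₁} + ⋯ + f_n^{δ_n} + f^δ` can be made zero in
`(ℤ^n)^{ℤ₂}`. -/
theorem statement15 (n : ℕ) (M : Matrix (Fin n) (Fin n) ℤ)
    (hM : ∀ i j, M i j = 0 ∨ M i j = 1)
    (F : Fin n → ZMod 2 → (Fin n → ℤ))
    (hF : ∀ j ε, F j ε = if ε = 0 then (fun i => M i j) else 0)
    (f : ZMod 2 → (Fin n → ℤ))
    (hf : ∀ ε, f ε = if ε = 0 then (fun _ => -1) else (fun i => 1 - ∑ j, M i j)) :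
    (∃ x : Fin n → ℤ, (∀ i, x i = 0 ∨ x i = 1) ∧ M.mulVec x = fun _ => 1) ↔
    (∃ (δ : Fin n → ZMod 2) (ε : ZMod 2),
      (fun u : ZMod 2 => (∑ j, F j (δ j + u)) + f (ε + u)) = fun _ => (0 : Fin n → ℤ)) :=
  statement15_general n M F hF f hf

end Stmt15
end

section
/- Let A, B be abelian groups, N ≤ B with quotient map φ and induced map φ* : A^B → A^{B/N}. Let f₁,…,f_m ∈ A^B and δ̄ = (δ₁,…,δ_m) ∈ B^m satisfy φ*(Σ_{i=1}^m f_i^{δ_i}) = 0. Let C be a cluster modulo N of the shifted functions (f_i^{δ_i}) and Δ ∈ B. Define δ'_i = δ_i + Δ for i ∈ C and δ'_i = δ_i for i ∉ C. Then φ*(Σ_{i=1}^m f_i^{δ'_i}) = 0. -/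
/-!
Pushing forward along `φ` turns a shift by `Δ` into a shift by `φ Δ`, so after the move the
members of the cluster contribute `φ*` of their old sum shifted by `φ Δ`, and the others
contribute what they did before. Distinct clusters have disjoint supports modulo `N`, so the
vanishing of the total sum forces each cluster sum to vanish separately; hence both parts are
still zero.
-/

namespace Stmt16

/-- The shift action: `(shiftF δ f) x = f (δ + x)`. -/
noncomputable def shiftF {A B : Type*} [AddCommGroup A] [AddCommGroup B]
    (δ : B) (f : B →₀ A) : B →₀ A :=
  Finsupp.mapDomain (fun x => x - δ) f

section Shift

variable {A B B' : Type*} [AddCommGroup A] [AddCommGroup B] [AddCommGroup B']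

noncomputable def shiftAddHom (δ : B) : (B →₀ A) →+ (B →₀ A) :=
  Finsupp.mapDomain.addMonoidHom (fun x => x - δ)

theorem mapDomain_shiftF_add (φ : B →+ B') (δ Δ : B) (f : B →₀ A) :
    Finsupp.mapDomain φ (shiftF (δ + Δ) f) =
      shiftF (φ Δ) (Finsupp.mapDomain φ (shiftF δ f)) := by
  simp only [shiftF, ← Finsupp.mapDomain_comp]
  congr 1
  funext x
  simp [map_sub, sub_sub]

end Shift

theorem Finsupp.mem_image_support_of_mem_support_mapDomain {α β M : Type*} [AddCommMonoid M]
    {φ : α → β} {v : α →₀ M} {b : β} (hb : b ∈ (Finsupp.mapDomain φ v).support) :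
    b ∈ φ '' (v.support : Set α) := by
  classical
  simpa using Finsupp.mapDomain_support hb

section ClusterSum

variable {ι α M : Type*} [Fintype ι] [AddCommMonoid M]

theorem Finsupp.sum_eq_zero_of_disjoint_support_compl (g : ι → α →₀ M) (C : Finset ι)
    (hsum : ∑ i, g i = 0)
    (hdisj : ∀ i ∈ C, ∀ j ∉ C, Disjoint (g i).support (g j).support) :
    ∑ i ∈ C, g i = 0 := by
  ext b
  rw [Finsupp.finsetSum_apply, Finsupp.coe_zero, Pi.zero_apply]
  by_cases hout : ∀ j ∉ C, g j b = 0
  · calc ∑ i ∈ C, g i b = ∑ i, g i b :=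
          Finset.sum_subset (Finset.subset_univ C) fun j _ hj => hout j hj
      _ = 0 := by rw [← Finsupp.finsetSum_apply, hsum, Finsupp.coe_zero, Pi.zero_apply]
  · push Not at hout
    obtain ⟨j, hjC, hjb⟩ := hout
    refine Finset.sum_eq_zero fun i hi => ?_
    by_contra hib
    exact Finset.disjoint_left.mp (hdisj i hi j hjC) (Finsupp.mem_support_iff.mpr hib)
      (Finsupp.mem_support_iff.mpr hjb)

theorem sum_ite_map_eq_zero [DecidableEq ι] (T : M →+ M) (g : ι → M) (C : Finset ι)
    (hsum : ∑ i, g i = 0) (hC : ∑ i ∈ C, g i = 0) :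
    ∑ i, (if i ∈ C then T (g i) else g i) = 0 := by
  have hout := Finset.sum_filter_add_sum_filter_not Finset.univ (· ∈ C) g
  rw [Finset.filter_mem_eq_inter, Finset.univ_inter, hC, zero_add, hsum] at hout
  rw [Finset.sum_ite, Finset.filter_mem_eq_inter, Finset.univ_inter, ← map_sum, hC, map_zero,
    zero_add, hout]

end ClusterSum

/-- Shifting all functions of one cluster modulo `N` simultaneously by `Δ` preserves
the property `φ*(∑ᵢ fᵢ^{δᵢ}) = 0`. -/
theorem statement16 {A B : Type*} [AddCommGroup A] [AddCommGroup B]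
    (N : AddSubgroup B) (m : ℕ) (f : Fin m → (B →₀ A)) (δ : Fin m → B)
    (h : Finsupp.mapDomain (⇑(QuotientAddGroup.mk' N)) (∑ i, shiftF (δ i) (f i)) = 0)
    (Jφ : Fin m → Fin m → Prop)
    (hJφ : ∀ i j, Jφ i j ↔
      ((⇑(QuotientAddGroup.mk' N) '' ((shiftF (δ i) (f i)).support : Set B)) ∩
        (⇑(QuotientAddGroup.mk' N) '' ((shiftF (δ j) (f j)).support : Set B))).Nonempty)
    (C : Finset (Fin m)) (i₀ : Fin m)
    (hC : ∀ j, j ∈ C ↔ Relation.EqvGen Jφ i₀ j)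
    (Δ : B) (δ' : Fin m → B)
    (hδ' : ∀ i, δ' i = if i ∈ C then δ i + Δ else δ i) :
    Finsupp.mapDomain (⇑(QuotientAddGroup.mk' N)) (∑ i, shiftF (δ' i) (f i)) = 0 := by
  classical
  set φ := QuotientAddGroup.mk' N
  set g : Fin m → (B ⧸ N) →₀ A := fun i => Finsupp.mapDomain φ (shiftF (δ i) (f i))
  have hsum : ∑ i, g i = 0 := by rw [← Finsupp.mapDomain_finsetSum]; exact h
  have hdisj : ∀ i ∈ C, ∀ j ∉ C, Disjoint (g i).support (g j).support := by
    intro i hi j hj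
    refine Finset.disjoint_left.mpr fun b hbi hbj => hj ?_
    have hJ : Jφ i j := (hJφ i j).mpr ⟨b,
      Finsupp.mem_image_support_of_mem_support_mapDomain hbi,
      Finsupp.mem_image_support_of_mem_support_mapDomain hbj⟩
    exact (hC j).mpr (((hC i).mp hi).trans _ _ _ (.rel _ _ hJ))
  have hterm : ∀ i, Finsupp.mapDomain φ (shiftF (δ' i) (f i)) =
      if i ∈ C then shiftAddHom (φ Δ) (g i) else g i := by
    intro i
    rw [hδ' i]
    split_ifs
    · exact mapDomain_shiftF_add φ (δ i) Δ (f i)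
    · rfl
  rw [Finsupp.mapDomain_finsetSum, Finset.sum_congr rfl fun i _ => hterm i]
  exact sum_ite_map_eq_zero _ g C hsum
    (Finsupp.sum_eq_zero_of_disjoint_support_compl g C hsum hdisj)

end Stmt16
end

section
/- Let A and B be abelian groups and c = (δ_c, f_c) ∈ A ≀ B with f_c the function component. For z = (δ_z, f_z) ∈ A ≀ B, the conjugate z^{-1} c z equals (δ_c, f_z·(1^0 − 1^{δ_c}) + f_c^{δ_z}) where f·(1^0 − 1^b) denotes f − f^b. Consequently, the product of conjugates Π_{j=1}^m z_j^{-1} c_j z_j equals 1 in A ≀ B for some z₁,…,z_m if and only if Σ_j δ_{c_j} = 0 and the function-component equation Σ_{j=1}^m [ f'_{z_j}(1^0 − 1^{δ_{c_j}}) + f_{c_j}^{δ'_{z_j}} ] = 0 has a solution, where δ'_{z_j} = δ_{z_j} + Σ_{i>j} δ_{c_i} and f'_{z_j} is a shift of f_{z_j}. -/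
/-!
A product `∏ wᵢ` in `A ≀ B` has base component `∑ δᵢ` and function component
`∑ fᵢ^{σᵢ}` with `σᵢ = ∑_{j>i} δⱼ`. For conjugates `wᵢ = zᵢ⁻¹ cᵢ zᵢ`, the shift by `σᵢ`
commutes with `1^0 − 1^{δ_{cᵢ}}`, so it can be absorbed into `zᵢ`: replacing
`zᵢ = (δ, f)` by `(δ + σᵢ, f^{σᵢ})` is a bijection turning the function component of the
product into the stated sum.
-/

namespace Stmt18

variable {A B : Type*} [AddCommGroup A] [AddCommGroup B]

/-- The shift action: `(shiftF δ f) x = f (δ + x)`. -/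
noncomputable def shiftF (δ : B) (f : B →₀ A) : B →₀ A :=
  Finsupp.mapDomain (fun x => x - δ) f

/-- Multiplication in the restricted wreath product `A ≀ B`. -/
noncomputable def wmul (p q : B × (B →₀ A)) : B × (B →₀ A) :=
  (p.1 + q.1, shiftF q.1 p.2 + q.2)

/-- Inversion in `A ≀ B`. -/
noncomputable def winv (p : B × (B →₀ A)) : B × (B →₀ A) :=
  (-p.1, -shiftF (-p.1) p.2)

/-- Conjugation `z⁻¹ c z` in `A ≀ B`. -/
noncomputable def wconj (z c : B × (B →₀ A)) : B × (B →₀ A) :=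
  wmul (winv z) (wmul c z)

lemma shiftF_add (δ : B) (f g : B →₀ A) : shiftF δ (f + g) = shiftF δ f + shiftF δ g :=
  map_add (Finsupp.mapDomain.addMonoidHom (· - δ)) f g

lemma shiftF_neg (δ : B) (f : B →₀ A) : shiftF δ (-f) = -shiftF δ f :=
  map_neg (Finsupp.mapDomain.addMonoidHom (· - δ)) f

lemma shiftF_sub (δ : B) (f g : B →₀ A) : shiftF δ (f - g) = shiftF δ f - shiftF δ g :=
  map_sub (Finsupp.mapDomain.addMonoidHom (· - δ)) f g

lemma shiftF_zero (f : B →₀ A) : shiftF (0 : B) f = f := by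
  simp only [shiftF, sub_zero]
  exact Finsupp.mapDomain_id

lemma shiftF_shiftF (δ ε : B) (f : B →₀ A) :
    shiftF δ (shiftF ε f) = shiftF (ε + δ) f := by
  simp only [shiftF, ← Finsupp.mapDomain_comp]
  congr 1
  funext x
  simp [sub_sub]

lemma shiftF_comm (δ ε : B) (f : B →₀ A) :
    shiftF δ (shiftF ε f) = shiftF ε (shiftF δ f) := by
  rw [shiftF_shiftF, shiftF_shiftF, add_comm]

lemma wconj_eq (z d : B × (B →₀ A)) :
    wconj z d = (d.1, (z.2 - shiftF d.1 z.2) + shiftF z.1 d.2) := by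
  have hbase : -z.1 + (d.1 + z.1) = d.1 := by abel
  refine Prod.ext hbase ?_
  change shiftF (d.1 + z.1) (-shiftF (-z.1) z.2) + (shiftF z.1 d.2 + z.2) =
    z.2 - shiftF d.1 z.2 + shiftF z.1 d.2
  rw [shiftF_neg, shiftF_shiftF, hbase]
  abel

lemma foldr_wmul_ofFn {m : ℕ} (w : Fin m → B × (B →₀ A)) :
    (List.ofFn w).foldr wmul (0, 0) =
      (∑ i, (w i).1, ∑ i, shiftF (∑ j ∈ Finset.Ioi i, (w j).1) (w i).2) := by
  induction m with
  | zero => simp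
  | succ n ih =>
    rw [List.ofFn_succ, List.foldr_cons, ih]
    refine Prod.ext ?_ ?_
    · simp [wmul, Fin.sum_univ_succ]
    · simp only [wmul, Fin.sum_univ_succ, Fin.sum_Ioi_zero, Fin.sum_Ioi_succ]

lemma wconj_fst (z d : B × (B →₀ A)) : (wconj z d).1 = d.1 :=
  (Prod.ext_iff.mp (wconj_eq z d)).1

lemma shiftF_wconj_snd (σ : B) (z d : B × (B →₀ A)) :
    shiftF σ (wconj z d).2 = (wconj (z.1 + σ, shiftF σ z.2) d).2 := by
  simp only [wconj_eq, shiftF_add, shiftF_sub, shiftF_shiftF, shiftF_comm σ d.1]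

/-- The conjugation formula `z⁻¹cz = (δ_c, f_z(1^0 − 1^{δ_c}) + f_c^{δ_z})` and the
reduction of spherical equations: `∏ⱼ zⱼ⁻¹cⱼzⱼ = 1` solvable iff `∑ⱼ δ_{cⱼ} = 0` and
the function-component equation `∑ⱼ [gⱼ(1^0 − 1^{δ_{cⱼ}}) + f_{cⱼ}^{eⱼ}] = 0` solvable. -/
theorem statement18 (m : ℕ) (c : Fin m → B × (B →₀ A)) :
    (∀ z d : B × (B →₀ A),
      wconj z d = (d.1, (z.2 - shiftF d.1 z.2) + shiftF z.1 d.2)) ∧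
    ((∃ z : Fin m → B × (B →₀ A),
        (List.ofFn fun i => wconj (z i) (c i)).foldr wmul ((0 : B), (0 : B →₀ A))
          = ((0 : B), (0 : B →₀ A))) ↔
      ((∑ j, (c j).1 = 0) ∧
        ∃ (g : Fin m → (B →₀ A)) (e : Fin m → B),
          ∑ j, ((g j - shiftF (c j).1 (g j)) + shiftF (e j) (c j).2) = 0)) := by
  refine ⟨wconj_eq, ?_⟩
  set σ : Fin m → B := fun i => ∑ j ∈ Finset.Ioi i, (c j).1
  have hprod : ∀ z : Fin m → B × (B →₀ A),
      (List.ofFn fun i => wconj (z i) (c i)).foldr wmul (0, 0) =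
        (∑ j, (c j).1, ∑ j, (wconj ((z j).1 + σ j, shiftF (σ j) (z j).2) (c j)).2) := by
    intro z
    rw [foldr_wmul_ofFn]
    simp only [wconj_fst, shiftF_wconj_snd]
    rfl
  simp_rw [hprod, Prod.mk.injEq, wconj_eq]
  constructor
  · rintro ⟨z, hbase, hfun⟩
    exact ⟨hbase, _, _, hfun⟩
  · rintro ⟨hbase, g, e, hfun⟩
    refine ⟨fun i => (e i - σ i, shiftF (-σ i) (g i)), hbase, ?_⟩
    simpa only [sub_add_cancel, shiftF_shiftF, neg_add_cancel, shiftF_zero] using hfun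

end Stmt18
end
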